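/- arXiv:0711.4206 — 2 statements merged into one kernel-verified Lean document; each statement's English description precedes it below -/
import Mathlib

section
/- Let u₁, w : ℝ → ℝ be differentiable functions satisfying, for all real x, u₁'(x) = −q(x)·(x·q(x) − v(x)q(x) + u(x)p(x)) and w'(x) = −p(x)², with u₁(x) → 0 and w(x) → 0 as x → +∞. Then for every s ∈ ℝ one has the first integral u₁(s) − u(s)·v(s) + w(s) = −p(s)·q(s) (equivalently, u₁(s) − u(s)v(s) + w(s) = v'(s)). -/
open Filter MeasureTheory Set Topology

/-!
Along the Tracy–Widom system, `u₁ - u v + w + p q` has derivative zero: differentiating `p q`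
produces exactly the terms that cancel those of `u₁' - (u v)' + w'`. This first integral tends
to `0` at `+∞`, so it vanishes identically.
-/

theorem eq_of_hasDerivAt_zero_of_tendsto_atTop {E : Type*} [NormedAddCommGroup E]
    [NormedSpace ℝ E] {f : ℝ → E} {L : E} (hf : ∀ x, HasDerivAt f 0 x)
    (hL : Tendsto f atTop (𝓝 L)) (x : ℝ) : f x = L := by
  have hconst : f = fun _ => f x := funext fun y =>
    is_const_of_deriv_eq_zero (fun z => (hf z).differentiableAt) (fun z => (hf z).deriv) y x
  rw [hconst] at hL
  exact tendsto_nhds_unique tendsto_const_nhds hL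

theorem stmt6_general (q p u v u₁ w : ℝ → ℝ)
    (hq : ∀ x : ℝ, HasDerivAt q (p x - u x * q x) x)
    (hp : ∀ x : ℝ, HasDerivAt p (x * q x - 2 * v x * q x + u x * p x) x)
    (hu : ∀ x : ℝ, HasDerivAt u (-(q x) ^ 2) x)
    (hv : ∀ x : ℝ, HasDerivAt v (-(p x * q x)) x)
    (hpq0 : Tendsto (fun x => p x * q x) atTop (nhds 0))
    (hu0 : Tendsto u atTop (nhds 0))
    (hv0 : Tendsto v atTop (nhds 0))
    (hu₁ : ∀ x : ℝ,
      HasDerivAt u₁ (-(q x * (x * q x - v x * q x + u x * p x))) x)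
    (hw : ∀ x : ℝ, HasDerivAt w (-(p x) ^ 2) x)
    (hu₁0 : Tendsto u₁ atTop (nhds 0))
    (hw0 : Tendsto w atTop (nhds 0)) :
    ∀ s : ℝ,
      u₁ s - u s * v s + w s = -(p s * q s) ∧
      u₁ s - u s * v s + w s = deriv v s := by
  intro s
  have hderiv : ∀ x, HasDerivAt (fun x => u₁ x - u x * v x + w x + p x * q x) 0 x := fun x =>
    ((((hu₁ x).sub ((hu x).mul (hv x))).add (hw x)).add ((hp x).mul (hq x))).congr_deriv
      (by ring)
  have hlim : Tendsto (fun x => u₁ x - u x * v x + w x + p x * q x) atTop (𝓝 0) := by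
    simpa using ((hu₁0.sub (hu0.mul hv0)).add hw0).add hpq0
  have hfirst : u₁ s - u s * v s + w s = -(p s * q s) := by
    linarith [eq_of_hasDerivAt_zero_of_tendsto_atTop hderiv hlim s]
  exact ⟨hfirst, hfirst.trans (hv s).deriv.symm⟩

/-- For the Tracy–Widom system, let `u₁, w : ℝ → ℝ` be differentiable with
`u₁'(x) = -q(x)·(x q(x) - v(x) q(x) + u(x) p(x))` and `w'(x) = -p(x)²`, with
`u₁ → 0` and `w → 0` at `+∞`. Then for every `s`,
`u₁(s) - u(s) v(s) + w(s) = -p(s) q(s)` (equivalently `= v'(s)`). -/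
theorem stmt6 (q p u v u₁ w : ℝ → ℝ)
    (hq : ∀ x : ℝ, HasDerivAt q (p x - u x * q x) x)
    (hp : ∀ x : ℝ, HasDerivAt p (x * q x - 2 * v x * q x + u x * p x) x)
    (hu : ∀ x : ℝ, HasDerivAt u (-(q x) ^ 2) x)
    (hv : ∀ x : ℝ, HasDerivAt v (-(p x * q x)) x)
    (hq0 : Tendsto q atTop (nhds 0))
    (hpq0 : Tendsto (fun x => p x * q x) atTop (nhds 0))
    (hu0 : Tendsto u atTop (nhds 0))
    (hv0 : Tendsto v atTop (nhds 0))
    (hu₁ : ∀ x : ℝ,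
      HasDerivAt u₁ (-(q x * (x * q x - v x * q x + u x * p x))) x)
    (hw : ∀ x : ℝ, HasDerivAt w (-(p x) ^ 2) x)
    (hu₁0 : Tendsto u₁ atTop (nhds 0))
    (hw0 : Tendsto w atTop (nhds 0)) :
    ∀ s : ℝ,
      u₁ s - u s * v s + w s = -(p s * q s) ∧
      u₁ s - u s * v s + w s = deriv v s :=
  stmt6_general q p u v u₁ w hq hp hu hv hpq0 hu0 hv0 hu₁ hw hu₁0 hw0
end

section
/- Fix s ∈ ℝ and a real constant c. Define a(x) := 2c·(p(x)q(x) − u(x)q(x)²) and b(x) := (20c²+3)·q(x)q₁(x) + 2·p₂(x)q(x) + (−60c²+3)·q(x)²v(x) + 2·p₁(x)q(x)v(x) + 2·p(x)q(x)v₁(x) − 2·q₂(x)q(x)u(x) − 2·q₁(x)q(x)u₁(x) − 2·q(x)²u₂(x) + (−60c²+3)·p(x)q(x)u(x) + 60c²·q(x)²u(x)² + (20c²−5)·p(x)². Assume in addition that q₁(x) = x·q(x) − v(x)q(x) + u(x)p(x) for all x, that the functions x ↦ (x−s)·a(x), x ↦ (x−s)·b(x), x ↦ q(x)², x ↦ p(x)q(x),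 x ↦ p(x)q(x) − u(x)q(x)² and x ↦ −6·u₁(x) − 2·v₂(x) − 2·v₁(x)v(x) + 2·u₂(x)u(x) + u₁(x)² + 2·w(x) are Lebesgue integrable on (s, ∞), and that (x−s)·q(x)² → 0, (x−s)·p(x)q(x) → 0, (x−s)·(p(x)q(x) − u(x)q(x)²) → 0 and (x−s)·(−6·u₁(x) − 2·v₂(x) − 2·v₁(x)v(x) + 2·u₂(x)u(x) + u₁(x)² + 2·w(x)) → 0 as x → +∞. Then 10·(∫_s^∞ (x−s)·a(x) dx)² − ∫_s^∞ (x−s)·b(x) dx = (20c² − 3)·v(s) + ∫_s^∞ (−6·u₁(x) − 2·v₂(x) − 2·v₁(x)v(x) + 2·u₂(x)u(x) + u₁(x)² + 2·w(x)) dx. -/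
/-!
Both weighted integrals are integrated by parts against the weight `x - s`. Since
`a = (c q²)'`, one gets `∫ (x-s) a = -c ∫ q² = -c u(s)`. Substituting
`q₁ = x q - v q + u p` and the first integral `v = (u² - q²)/2` of the system, `b` is the
derivative of `G - H`, where `G` is the integrand on the right-hand side and
`H = 3 p q - 20 c² (p q - u q²) = ((20 c² - 3) v - 10 c² u²)'`. Hence
`∫ (x-s) b = ∫ H - ∫ G = 10 c² u(s)² - (20 c² - 3) v(s) - ∫ G`, and the `u(s)²` terms cancel.
-/

open Filter MeasureTheory Set Topology

theorem integral_Ioi_of_hasDerivAt_of_tendsto_zero {F f : ℝ → ℝ} {s : ℝ}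
    (hF : ∀ x ∈ Ici s, HasDerivAt F (f x) x) (hf : IntegrableOn f (Ioi s))
    (hF0 : Tendsto F atTop (𝓝 0)) :
    ∫ x in Ioi s, f x = -F s := by
  rw [integral_Ioi_of_hasDerivAt_of_tendsto' hF hf hF0, zero_sub]

theorem eq_zero_of_hasDerivAt_zero_of_tendsto {F : ℝ → ℝ} (hF : ∀ x, HasDerivAt F 0 x)
    (hF0 : Tendsto F atTop (𝓝 0)) (x : ℝ) : F x = 0 := by
  have h := integral_Ioi_of_hasDerivAt_of_tendsto_zero (s := x) (fun y _ => hF y)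
    integrableOn_zero hF0
  rw [integral_zero] at h
  linarith

theorem integral_Ioi_sub_mul_of_hasDerivAt {F f : ℝ → ℝ} {s : ℝ}
    (hF : ∀ x ∈ Ici s, HasDerivAt F (f x) x) (hFi : IntegrableOn F (Ioi s))
    (hfi : IntegrableOn (fun x => (x - s) * f x) (Ioi s))
    (hlim : Tendsto (fun x => (x - s) * F x) atTop (𝓝 0)) :
    ∫ x in Ioi s, (x - s) * f x = -∫ x in Ioi s, F x := by
  have hderiv : ∀ x ∈ Ici s, HasDerivAt (fun y => (y - s) * F y) (F x + (x - s) * f x) x := by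
    intro x hx
    exact (((hasDerivAt_id x).sub_const s).mul (hF x hx)).congr_deriv (by simp)
  have h := integral_Ioi_of_hasDerivAt_of_tendsto_zero hderiv (hFi.add hfi) hlim
  rw [integral_add hFi hfi, sub_self, zero_mul, neg_zero] at h
  linarith

namespace TracyWidom

variable {q p u v : ℝ → ℝ}

theorem v_eq_sq_sub_sq_div_two (hq : ∀ x, HasDerivAt q (p x - u x * q x) x)
    (hu : ∀ x, HasDerivAt u (-(q x) ^ 2) x) (hv : ∀ x, HasDerivAt v (-(p x * q x)) x)
    (hq0 : Tendsto q atTop (𝓝 0)) (hu0 : Tendsto u atTop (𝓝 0))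
    (hv0 : Tendsto v atTop (𝓝 0)) (x : ℝ) :
    v x = (u x ^ 2 - q x ^ 2) / 2 := by
  have hderiv : ∀ y, HasDerivAt (fun y => v y - u y ^ 2 / 2 + q y ^ 2 / 2) 0 y := fun y =>
    (((hv y).sub (((hu y).pow 2).div_const 2)).add (((hq y).pow 2).div_const 2)).congr_deriv
      (by ring)
  have hlim : Tendsto (fun y => v y - u y ^ 2 / 2 + q y ^ 2 / 2) atTop (𝓝 0) := by
    simpa using (hv0.sub ((hu0.pow 2).div_const 2)).add ((hq0.pow 2).div_const 2)
  have := eq_zero_of_hasDerivAt_zero_of_tendsto hderiv hlim x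
  linarith

theorem hasDerivAt_p_mul_q (hq : ∀ x, HasDerivAt q (p x - u x * q x) x)
    (hp : ∀ x, HasDerivAt p (x * q x - 2 * v x * q x + u x * p x) x) (x : ℝ) :
    HasDerivAt (fun y => p y * q y) (x * q x ^ 2 - 2 * v x * q x ^ 2 + p x ^ 2) x :=
  ((hp x).mul (hq x)).congr_deriv (by ring)

theorem hasDerivAt_u_mul_q_sq (hq : ∀ x, HasDerivAt q (p x - u x * q x) x)
    (hu : ∀ x, HasDerivAt u (-(q x) ^ 2) x) (x : ℝ) :
    HasDerivAt (fun y => u y * q y ^ 2)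
      (2 * u x * p x * q x - 2 * u x ^ 2 * q x ^ 2 - q x ^ 4) x :=
  ((hu x).mul ((hq x).pow 2)).congr_deriv (by simp only [Pi.pow_apply]; ring)

theorem hasDerivAt_primitive_b {q₁ q₂ p₁ p₂ u₁ u₂ v₁ v₂ w : ℝ → ℝ} (c : ℝ)
    (hq : ∀ x, HasDerivAt q (p x - u x * q x) x)
    (hp : ∀ x, HasDerivAt p (x * q x - 2 * v x * q x + u x * p x) x)
    (hu : ∀ x, HasDerivAt u (-(q x) ^ 2) x) (hv : ∀ x, HasDerivAt v (-(p x * q x)) x)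
    (hu₁ : ∀ x, HasDerivAt u₁ (-(q x * q₁ x)) x) (hu₂ : ∀ x, HasDerivAt u₂ (-(q x * q₂ x)) x)
    (hv₁ : ∀ x, HasDerivAt v₁ (-(q x * p₁ x)) x) (hv₂ : ∀ x, HasDerivAt v₂ (-(q x * p₂ x)) x)
    (hw : ∀ x, HasDerivAt w (-(p x) ^ 2) x) {x : ℝ}
    (hq₁ : q₁ x = x * q x - v x * q x + u x * p x) (hvx : v x = (u x ^ 2 - q x ^ 2) / 2) :
    HasDerivAt
      (fun y => (-6 * u₁ y - 2 * v₂ y - 2 * v₁ y * v y + 2 * u₂ y * u y + u₁ y ^ 2 + 2 * w y)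
        - (3 * (p y * q y) - 20 * c ^ 2 * (p y * q y - u y * q y ^ 2)))
      ((20 * c ^ 2 + 3) * q x * q₁ x + 2 * p₂ x * q x
        + (-60 * c ^ 2 + 3) * (q x) ^ 2 * v x + 2 * p₁ x * q x * v x
        + 2 * p x * q x * v₁ x - 2 * q₂ x * q x * u x - 2 * q₁ x * q x * u₁ x
        - 2 * (q x) ^ 2 * u₂ x + (-60 * c ^ 2 + 3) * p x * q x * u x
        + 60 * c ^ 2 * (q x) ^ 2 * (u x) ^ 2 + (20 * c ^ 2 - 5) * (p x) ^ 2) x := by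
  have hG := ((((((hu₁ x).const_mul (-6)).sub ((hv₂ x).const_mul 2)).sub
    (((hv₁ x).mul (hv x)).const_mul 2)).add (((hu₂ x).mul (hu x)).const_mul 2)).add
    ((hu₁ x).pow 2)).add ((hw x).const_mul 2)
  have hpq := hasDerivAt_p_mul_q hq hp x
  have hH := (hpq.const_mul 3).sub
    ((hpq.sub (hasDerivAt_u_mul_q_sq hq hu x)).const_mul (20 * c ^ 2))
  refine (hG.sub hH).congr_of_eventuallyEq (Eventually.of_forall fun y => ?_) |>.congr_deriv ?_
  · simp only [Pi.add_apply, Pi.sub_apply, Pi.mul_apply, Pi.pow_apply]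
    ring
  · linear_combination (-(20 * c ^ 2 - 3) * q x) * hq₁ + (40 * c ^ 2 * q x ^ 2) * hvx

end TracyWidom

open TracyWidom

theorem stmt9_general (q p u v q₁ q₂ p₁ p₂ u₁ u₂ v₁ v₂ w : ℝ → ℝ)
    (hq : ∀ x : ℝ, HasDerivAt q (p x - u x * q x) x)
    (hp : ∀ x : ℝ, HasDerivAt p (x * q x - 2 * v x * q x + u x * p x) x)
    (hu : ∀ x : ℝ, HasDerivAt u (-(q x) ^ 2) x)
    (hv : ∀ x : ℝ, HasDerivAt v (-(p x * q x)) x)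
    (hq0 : Tendsto q atTop (nhds 0))
    (hu0 : Tendsto u atTop (nhds 0))
    (hv0 : Tendsto v atTop (nhds 0))
    (hu₁ : ∀ x : ℝ, HasDerivAt u₁ (-(q x * q₁ x)) x)
    (hu₂ : ∀ x : ℝ, HasDerivAt u₂ (-(q x * q₂ x)) x)
    (hv₁ : ∀ x : ℝ, HasDerivAt v₁ (-(q x * p₁ x)) x)
    (hv₂ : ∀ x : ℝ, HasDerivAt v₂ (-(q x * p₂ x)) x)
    (hw : ∀ x : ℝ, HasDerivAt w (-(p x) ^ 2) x)
    (s c : ℝ)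
    (hq₁ : ∀ x : ℝ, q₁ x = x * q x - v x * q x + u x * p x)
    (hinta : IntegrableOn
      (fun x => (x - s) * (2 * c * (p x * q x - u x * (q x) ^ 2))) (Ioi s))
    (hintb : IntegrableOn
      (fun x => (x - s) * ((20 * c ^ 2 + 3) * q x * q₁ x + 2 * p₂ x * q x
        + (-60 * c ^ 2 + 3) * (q x) ^ 2 * v x + 2 * p₁ x * q x * v x
        + 2 * p x * q x * v₁ x - 2 * q₂ x * q x * u x - 2 * q₁ x * q x * u₁ x
        - 2 * (q x) ^ 2 * u₂ x + (-60 * c ^ 2 + 3) * p x * q x * u x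
        + 60 * c ^ 2 * (q x) ^ 2 * (u x) ^ 2 + (20 * c ^ 2 - 5) * (p x) ^ 2))
      (Ioi s))
    (hintq2 : IntegrableOn (fun x => (q x) ^ 2) (Ioi s))
    (hintpq : IntegrableOn (fun x => p x * q x) (Ioi s))
    (hintpquq : IntegrableOn (fun x => p x * q x - u x * (q x) ^ 2) (Ioi s))
    (hintG : IntegrableOn
      (fun x => -6 * u₁ x - 2 * v₂ x - 2 * v₁ x * v x + 2 * u₂ x * u x
        + (u₁ x) ^ 2 + 2 * w x) (Ioi s))
    (hlimq2 : Tendsto (fun x => (x - s) * (q x) ^ 2) atTop (nhds 0))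
    (hlimpq : Tendsto (fun x => (x - s) * (p x * q x)) atTop (nhds 0))
    (hlimpquq : Tendsto (fun x => (x - s) * (p x * q x - u x * (q x) ^ 2))
      atTop (nhds 0))
    (hlimG : Tendsto
      (fun x => (x - s) * (-6 * u₁ x - 2 * v₂ x - 2 * v₁ x * v x + 2 * u₂ x * u x
        + (u₁ x) ^ 2 + 2 * w x)) atTop (nhds 0)) :
    10 * (∫ x in Ioi s, (x - s) * (2 * c * (p x * q x - u x * (q x) ^ 2))) ^ 2
      - (∫ x in Ioi s, (x - s) * ((20 * c ^ 2 + 3) * q x * q₁ x + 2 * p₂ x * q x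
          + (-60 * c ^ 2 + 3) * (q x) ^ 2 * v x + 2 * p₁ x * q x * v x
          + 2 * p x * q x * v₁ x - 2 * q₂ x * q x * u x - 2 * q₁ x * q x * u₁ x
          - 2 * (q x) ^ 2 * u₂ x + (-60 * c ^ 2 + 3) * p x * q x * u x
          + 60 * c ^ 2 * (q x) ^ 2 * (u x) ^ 2 + (20 * c ^ 2 - 5) * (p x) ^ 2))
      = (20 * c ^ 2 - 3) * v s
        + ∫ x in Ioi s, (-6 * u₁ x - 2 * v₂ x - 2 * v₁ x * v x + 2 * u₂ x * u x
            + (u₁ x) ^ 2 + 2 * w x) := by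
  have hvq := v_eq_sq_sub_sq_div_two hq hu hv hq0 hu0 hv0
  have hq2 : ∫ x in Ioi s, q x ^ 2 = u s := by
    simpa using integral_Ioi_of_hasDerivAt_of_tendsto_zero (F := fun x => -u x)
      (fun x _ => (hu x).neg.congr_deriv (neg_neg _)) hintq2 (by simpa using hu0.neg)
  have ha : ∫ x in Ioi s, (x - s) * (2 * c * (p x * q x - u x * q x ^ 2)) = -c * u s := by
    rw [integral_Ioi_sub_mul_of_hasDerivAt (F := fun x => c * q x ^ 2)
      (fun x _ => (((hq x).pow 2).const_mul c).congr_deriv (by ring))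
      (hintq2.const_mul c) hinta (by simpa [mul_left_comm] using hlimq2.const_mul c),
      integral_const_mul, hq2, neg_mul]
  have hintH : IntegrableOn
      (fun x => 3 * (p x * q x) - 20 * c ^ 2 * (p x * q x - u x * q x ^ 2)) (Ioi s) :=
    (hintpq.const_mul 3).sub (hintpquq.const_mul _)
  have hH : ∫ x in Ioi s, (3 * (p x * q x) - 20 * c ^ 2 * (p x * q x - u x * q x ^ 2))
      = 10 * c ^ 2 * u s ^ 2 - (20 * c ^ 2 - 3) * v s := by
    rw [integral_Ioi_of_hasDerivAt_of_tendsto_zero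
      (F := fun x => (20 * c ^ 2 - 3) * v x - 10 * c ^ 2 * u x ^ 2)
      (fun x _ => (((hv x).const_mul _).sub (((hu x).pow 2).const_mul _)).congr_deriv
        (by ring)) hintH
      (by simpa using (hv0.const_mul (20 * c ^ 2 - 3)).sub ((hu0.pow 2).const_mul (10 * c ^ 2)))]
    ring
  have hlim := hlimG.sub ((hlimpq.const_mul 3).sub (hlimpquq.const_mul (20 * c ^ 2)))
  simp only [mul_zero, sub_self] at hlim
  rw [ha, integral_Ioi_sub_mul_of_hasDerivAt
    (fun x _ => hasDerivAt_primitive_b c hq hp hu hv hu₁ hu₂ hv₁ hv₂ hw (hq₁ x) (hvq x))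
    (hintG.sub hintH) hintb (by convert hlim using 2; ring), integral_sub hintG hintH, hH]
  ring

/-- For the Tracy–Widom system together with differentiable functions
`q₁, q₂, p₁, p₂, u₁, u₂, v₁, v₂, w` satisfying `u₁' = -q q₁`, `u₂' = -q q₂`,
`v₁' = -q p₁`, `v₂' = -q p₂`, `w' = -p²`, a fixed `s` and constant `c`, with
`a = 2c(pq - u q²)` and
`b = (20c²+3) q q₁ + 2 p₂ q + (-60c²+3) q² v + 2 p₁ q v + 2 p q v₁ - 2 q₂ q u
  - 2 q₁ q u₁ - 2 q² u₂ + (-60c²+3) p q u + 60c² q² u² + (20c²-5) p²`,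
assuming `q₁ = x q - v q + u p`, the stated integrability, and the stated decay
at `+∞`, one has
`10 (∫_s^∞ (x-s) a)² - ∫_s^∞ (x-s) b
  = (20c² - 3) v(s) + ∫_s^∞ (-6 u₁ - 2 v₂ - 2 v₁ v + 2 u₂ u + u₁² + 2 w)`. -/
theorem stmt9 (q p u v q₁ q₂ p₁ p₂ u₁ u₂ v₁ v₂ w : ℝ → ℝ)
    (hq : ∀ x : ℝ, HasDerivAt q (p x - u x * q x) x)
    (hp : ∀ x : ℝ, HasDerivAt p (x * q x - 2 * v x * q x + u x * p x) x)
    (hu : ∀ x : ℝ, HasDerivAt u (-(q x) ^ 2) x)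
    (hv : ∀ x : ℝ, HasDerivAt v (-(p x * q x)) x)
    (hq0 : Tendsto q atTop (nhds 0))
    (hpq0 : Tendsto (fun x => p x * q x) atTop (nhds 0))
    (hu0 : Tendsto u atTop (nhds 0))
    (hv0 : Tendsto v atTop (nhds 0))
    (hq₁d : Differentiable ℝ q₁) (hq₂d : Differentiable ℝ q₂)
    (hp₁d : Differentiable ℝ p₁) (hp₂d : Differentiable ℝ p₂)
    (hu₁ : ∀ x : ℝ, HasDerivAt u₁ (-(q x * q₁ x)) x)
    (hu₂ : ∀ x : ℝ, HasDerivAt u₂ (-(q x * q₂ x)) x)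
    (hv₁ : ∀ x : ℝ, HasDerivAt v₁ (-(q x * p₁ x)) x)
    (hv₂ : ∀ x : ℝ, HasDerivAt v₂ (-(q x * p₂ x)) x)
    (hw : ∀ x : ℝ, HasDerivAt w (-(p x) ^ 2) x)
    (s c : ℝ)
    (hq₁ : ∀ x : ℝ, q₁ x = x * q x - v x * q x + u x * p x)
    (hinta : IntegrableOn
      (fun x => (x - s) * (2 * c * (p x * q x - u x * (q x) ^ 2))) (Ioi s))
    (hintb : IntegrableOn
      (fun x => (x - s) * ((20 * c ^ 2 + 3) * q x * q₁ x + 2 * p₂ x * q x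
        + (-60 * c ^ 2 + 3) * (q x) ^ 2 * v x + 2 * p₁ x * q x * v x
        + 2 * p x * q x * v₁ x - 2 * q₂ x * q x * u x - 2 * q₁ x * q x * u₁ x
        - 2 * (q x) ^ 2 * u₂ x + (-60 * c ^ 2 + 3) * p x * q x * u x
        + 60 * c ^ 2 * (q x) ^ 2 * (u x) ^ 2 + (20 * c ^ 2 - 5) * (p x) ^ 2))
      (Ioi s))
    (hintq2 : IntegrableOn (fun x => (q x) ^ 2) (Ioi s))
    (hintpq : IntegrableOn (fun x => p x * q x) (Ioi s))
    (hintpquq : IntegrableOn (fun x => p x * q x - u x * (q x) ^ 2) (Ioi s))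
    (hintG : IntegrableOn
      (fun x => -6 * u₁ x - 2 * v₂ x - 2 * v₁ x * v x + 2 * u₂ x * u x
        + (u₁ x) ^ 2 + 2 * w x) (Ioi s))
    (hlimq2 : Tendsto (fun x => (x - s) * (q x) ^ 2) atTop (nhds 0))
    (hlimpq : Tendsto (fun x => (x - s) * (p x * q x)) atTop (nhds 0))
    (hlimpquq : Tendsto (fun x => (x - s) * (p x * q x - u x * (q x) ^ 2))
      atTop (nhds 0))
    (hlimG : Tendsto
      (fun x => (x - s) * (-6 * u₁ x - 2 * v₂ x - 2 * v₁ x * v x + 2 * u₂ x * u x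
        + (u₁ x) ^ 2 + 2 * w x)) atTop (nhds 0)) :
    10 * (∫ x in Ioi s, (x - s) * (2 * c * (p x * q x - u x * (q x) ^ 2))) ^ 2
      - (∫ x in Ioi s, (x - s) * ((20 * c ^ 2 + 3) * q x * q₁ x + 2 * p₂ x * q x
          + (-60 * c ^ 2 + 3) * (q x) ^ 2 * v x + 2 * p₁ x * q x * v x
          + 2 * p x * q x * v₁ x - 2 * q₂ x * q x * u x - 2 * q₁ x * q x * u₁ x
          - 2 * (q x) ^ 2 * u₂ x + (-60 * c ^ 2 + 3) * p x * q x * u x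
          + 60 * c ^ 2 * (q x) ^ 2 * (u x) ^ 2 + (20 * c ^ 2 - 5) * (p x) ^ 2))
      = (20 * c ^ 2 - 3) * v s
        + ∫ x in Ioi s, (-6 * u₁ x - 2 * v₂ x - 2 * v₁ x * v x + 2 * u₂ x * u x
            + (u₁ x) ^ 2 + 2 * w x) :=
  stmt9_general q p u v q₁ q₂ p₁ p₂ u₁ u₂ v₁ v₂ w hq hp hu hv hq0 hu0 hv0 hu₁ hu₂ hv₁ hv₂ hw s c hq₁
    hinta hintb hintq2 hintpq hintpquq hintG hlimq2 hlimpq hlimpquq hlimG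
end
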